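/- arXiv:2403.06663 — 2 statements merged into one kernel-verified Lean document; each statement's English description precedes it below -/
import Mathlib

section
/- A right A-module homomorphism g : P_1 → k_ε satisfies g ∘ d_2 = 0 if and only if g^{v^σ}_{j,i} = −g^v_{i,j} for every v ∈ V and every (j,i) ∈ {1,…,n}². Moreover, if these identities hold for one particular v ∈ V (and all (j,i) ∈ {1,…,n}²), then they hold for every v ∈ V. -/
/-!
Common setting (from the paper "The Anick resolution of the co-unit of the free unitary
quantum group", arXiv:2403.06663):

`k` is a field and `n ≥ 2`.  `S` is the set of `2n²` generators `u∘_{j,i}, u•_{j,i}`,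
`(j,i) ∈ {1,…,n}²`, with the involution `*` exchanging `u∘_{j,i}` and `u•_{j,i}`.
Indices are realized `0`-based as elements of `Fin n` (so the index `1` is `fin1 = 0`,
the index `n` is `finN = n-1`, and `σ(i) = n-i+1` is `Fin.rev`).
-/

namespace UnPlusAnick

/-- A generator: a color (`false` = white `∘`, `true` = black `•`) and a pair of indices. -/
abbrev Gen (n : ℕ) := Bool × Fin n × Fin n

/-- The involution `*` on the generators: it flips the color and keeps the indices. -/
def genStar {n : ℕ} (g : Gen n) : Gen n := (!g.1, g.2)

/-- An `n × n` matrix with entries in the set of generators. -/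
abbrev Mat (n : ℕ) := Fin n → Fin n → Gen n

/-- The fundamental matrix `u`, `u_{j,i} = u∘_{j,i}`. -/
def uMat (n : ℕ) : Mat n := fun j i => (false, j, i)

/-- The transpose `vᵀ`. -/
def mT {n : ℕ} (v : Mat n) : Mat n := fun j i => v i j

/-- The matrix `v^σ`, `(v^σ)_{j,i} = (v_{σ(j),σ(i)})^*`. -/
def mS {n : ℕ} (v : Mat n) : Mat n := fun j i => genStar (v j.rev i.rev)

/-- The matrix `v^δ`, `(v^δ)_{j,i} = (v_{σ(i),σ(j)})^*`; thus `v^δ = (v^σ)ᵀ`. -/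
def mD {n : ℕ} (v : Mat n) : Mat n := fun j i => genStar (v i.rev j.rev)

/-- The set `V = {u, uᵀ, u^σ, u^δ}`. -/
def V (n : ℕ) : Set (Mat n) := {uMat n, mT (uMat n), mS (uMat n), mD (uMat n)}

/-- The index `1` of `{1, …, n}`, as the `0`-based element `0` of `Fin n`. -/
def fin1 (n : ℕ) (hn : 2 ≤ n) : Fin n := ⟨0, by omega⟩

/-- The index `n` of `{1, …, n}`, as the `0`-based element `n - 1` of `Fin n`. -/
def finN (n : ℕ) (hn : 2 ≤ n) : Fin n := ⟨n - 1, by omega⟩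

theorem genStar_genStar {n : ℕ} (g : Gen n) : genStar (genStar g) = g := by simp [genStar]

theorem mS_mS {n : ℕ} (v : Mat n) : mS (mS v) = v := by
  funext j i; simp [mS, genStar_genStar]

theorem mD_mD {n : ℕ} (v : Mat n) : mD (mD v) = v := by
  funext j i; simp [mD, genStar_genStar]

theorem mS_mD {n : ℕ} (v : Mat n) : mS (mD v) = mT v := by
  funext j i; simp [mS, mD, mT, genStar_genStar]

theorem mD_mS {n : ℕ} (v : Mat n) : mD (mS v) = mT v := by
  funext j i; simp [mS, mD, mT, genStar_genStar]

/-- `V` is closed under transposition. -/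
theorem V_mT {n : ℕ} {v : Mat n} (hv : v ∈ V n) : mT v ∈ V n := by
  simp only [V, Set.mem_insert_iff, Set.mem_singleton_iff] at hv ⊢
  rcases hv with rfl | rfl | rfl | rfl
  · exact Or.inr (Or.inl rfl)
  · exact Or.inl rfl
  · exact Or.inr (Or.inr (Or.inr rfl))
  · exact Or.inr (Or.inr (Or.inl rfl))

/-- `V` is closed under `v ↦ v^σ`. -/
theorem V_mS {n : ℕ} {v : Mat n} (hv : v ∈ V n) : mS v ∈ V n := by
  simp only [V, Set.mem_insert_iff, Set.mem_singleton_iff] at hv ⊢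
  rcases hv with rfl | rfl | rfl | rfl
  · exact Or.inr (Or.inr (Or.inl rfl))
  · exact Or.inr (Or.inr (Or.inr rfl))
  · exact Or.inl (mS_mS _)
  · exact Or.inr (Or.inl (mS_mD _))

/-- `V` is closed under `v ↦ v^δ`. -/
theorem V_mD {n : ℕ} {v : Mat n} (hv : v ∈ V n) : mD v ∈ V n := by
  simp only [V, Set.mem_insert_iff, Set.mem_singleton_iff] at hv ⊢
  rcases hv with rfl | rfl | rfl | rfl
  · exact Or.inr (Or.inr (Or.inr rfl))
  · exact Or.inr (Or.inr (Or.inl rfl))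
  · exact Or.inr (Or.inl (mD_mS _))
  · exact Or.inl (mD_mD _)

/-! ### Words and the free algebra -/

/-- Words in the generators: the free monoid over the set of generators. -/
abbrev Word (n : ℕ) := FreeMonoid (Gen n)

/-- The free unital associative `k`-algebra on the generators, realized as the monoid algebra
of the free monoid of words; its canonical `k`-basis is the set of words. -/
abbrev FreeAlg (k : Type*) [Field k] (n : ℕ) := MonoidAlgebra k (Word n)

/-- A word, viewed as a monomial in the free algebra. -/
noncomputable def wd (k : Type*) [Field k] {n : ℕ} (w : Word n) : FreeAlg k n :=
  MonoidAlgebra.of k (Word n) w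

/-- The relation `b^v_{j,i} = ∑_{s=1}^{n} v_{j,σ(s)} (v^δ)_{s,σ(i)} − δ_{j,i} · 1`. -/
noncomputable def brel (k : Type*) [Field k] {n : ℕ} (v : Mat n) (j i : Fin n) : FreeAlg k n :=
  (∑ s : Fin n, wd k (FreeMonoid.of (v j s.rev) * FreeMonoid.of (mD v s i.rev)))
    - if j = i then 1 else 0

/-- The set of relations `R = {b^v_{j,i} : v ∈ V, (j,i) ∈ {1,…,n}²}`. -/
def rels (k : Type*) [Field k] (n : ℕ) : Set (FreeAlg k n) :=
  {x | ∃ v ∈ V n, ∃ j i : Fin n, x = brel k v j i}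

/-- `b̃^v = v_{n,n}(v^δ)_{1,1} − ∑_{s=2}^{n} ∑_{t=1}^{n−1} v_{t,σ(s)}(v^δ)_{s,σ(t)} + (n−2)·1`. -/
noncomputable def btil (k : Type*) [Field k] (n : ℕ) (hn : 2 ≤ n) (v : Mat n) : FreeAlg k n :=
  wd k (FreeMonoid.of (v (finN n hn) (finN n hn)) * FreeMonoid.of (mD v (fin1 n hn) (fin1 n hn)))
    - (∑ s ∈ Finset.univ.filter (fun s : Fin n => s ≠ fin1 n hn),
        ∑ t ∈ Finset.univ.filter (fun t : Fin n => t ≠ finN n hn),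
          wd k (FreeMonoid.of (v t s.rev) * FreeMonoid.of (mD v s t.rev)))
    + ((n - 2 : ℕ) : FreeAlg k n)

/-! ### The monomial order and tips -/

/-- The strict order on the generators: every black generator is smaller than every white one;
`u•_{t,s} < u•_{j,i}` iff `(j,i) <` `(t,s)` lexicographically, and `u∘_{t,s} < u∘_{j,i}` iff
`(t,s) < (j,i)` lexicographically. -/
def genLT {n : ℕ} (g h : Gen n) : Prop :=
  (g.1 = true ∧ h.1 = false) ∨
    (g.1 = true ∧ h.1 = true ∧ toLex h.2 < toLex g.2) ∨
    (g.1 = false ∧ h.1 = false ∧ toLex g.2 < toLex h.2)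

/-- The degreewise lexicographic extension of the order on generators to words:
`w ≤ w'` iff `w = w'`, or `w` is shorter than `w'`, or they have the same length and `w`
precedes `w'` lexicographically letter by letter. -/
def wordLE {n : ℕ} (w w' : Word n) : Prop :=
  w = w' ∨ (FreeMonoid.toList w).length < (FreeMonoid.toList w').length ∨
    ((FreeMonoid.toList w).length = (FreeMonoid.toList w').length ∧
      List.Lex genLT (FreeMonoid.toList w) (FreeMonoid.toList w'))

/-- `IsTip f t`: the word `t` is the `≤`-largest word occurring with nonzero coefficient in
`f`, i.e. `Tip(f) = t`. -/
def IsTip (k : Type*) [Field k] {n : ℕ} (f : FreeAlg k n) (t : Word n) : Prop :=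
  f.coeff t ≠ 0 ∧ ∀ w : Word n, f.coeff w ≠ 0 → wordLE w t

/-- `w` divides `w'` (as words in the free monoid). -/
def WDvd {n : ℕ} (w w' : Word n) : Prop := ∃ w₁ w₂ : Word n, w' = w₁ * w * w₂

/-! ### The ideal of relations -/

/-- The two-sided ideal `I` of the free algebra generated by the set of relations `R`. -/
noncomputable def idl (k : Type*) [Field k] (n : ℕ) : TwoSidedIdeal (FreeAlg k n) :=
  TwoSidedIdeal.span (rels k n)

/-- The set `Tip(I)` of tips of nonzero elements of `I`. -/
def TipSet (k : Type*) [Field k] (n : ℕ) : Set (Word n) :=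
  {w | ∃ f : FreeAlg k n, f ∈ idl k n ∧ f ≠ 0 ∧ IsTip k f w}

/-! ### Reductions and ambiguities -/

/-- `φ` is a one-step reduction by `f`: there are fixed words `w₁`, `w₂` such that `φ` maps the
word `w₁ Tip(f) w₂` to `w₁ (Tip(f) − c⁻¹ f) w₂`, where `c` is the leading coefficient of `f`,
and fixes every other word. -/
def IsOneStep (k : Type*) [Field k] {n : ℕ} (f : FreeAlg k n)
    (φ : FreeAlg k n →ₗ[k] FreeAlg k n) : Prop :=
  f ≠ 0 ∧ ∃ (w₁ w₂ t : Word n), IsTip k f t ∧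
    φ (wd k (w₁ * t * w₂)) = wd k w₁ * (wd k t - (f.coeff t)⁻¹ • f) * wd k w₂ ∧
    ∀ w : Word n, w ≠ w₁ * t * w₂ → φ (wd k w) = wd k w

/-- A reduction by a set `G`: a finite composition of one-step reductions by nonzero elements
of `G`. -/
inductive IsReduction (k : Type*) [Field k] {n : ℕ} (G : Set (FreeAlg k n)) :
    (FreeAlg k n →ₗ[k] FreeAlg k n) → Prop
  | id : IsReduction k G LinearMap.id
  | comp {φ ψ : FreeAlg k n →ₗ[k] FreeAlg k n} {g : FreeAlg k n} (hg : g ∈ G)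
      (hφ : IsOneStep k g φ) (hψ : IsReduction k G ψ) : IsReduction k G (φ ∘ₗ ψ)

/-- `(g, g', w₁, w₂)` is an inclusion ambiguity of `G`. -/
def IsInclusionAmbiguity (k : Type*) [Field k] {n : ℕ} (G : Set (FreeAlg k n))
    (g g' : FreeAlg k n) (w₁ w₂ : Word n) : Prop :=
  g ∈ G ∧ g' ∈ G ∧ g ≠ 0 ∧ g' ≠ 0 ∧ g ≠ g' ∧
    ∃ t t' : Word n, IsTip k g t ∧ IsTip k g' t' ∧ w₁ * t * w₂ = t'

/-- The inclusion ambiguity `(g, g', w₁, w₂)` of `G` resolves. -/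
def InclusionAmbiguityResolves (k : Type*) [Field k] {n : ℕ} (G : Set (FreeAlg k n))
    (g g' : FreeAlg k n) (w₁ w₂ : Word n) : Prop :=
  ∀ t t' : Word n, IsTip k g t → IsTip k g' t' →
    ∃ φ₁ φ₂ : FreeAlg k n →ₗ[k] FreeAlg k n, IsReduction k G φ₁ ∧ IsReduction k G φ₂ ∧
      φ₁ (wd k t' - (g'.coeff t')⁻¹ • g') = φ₂ (wd k w₁ * (wd k t - (g.coeff t)⁻¹ • g) * wd k w₂)

/-- `(g₁, g₂, w₁, w₂)` is an overlap ambiguity of `G`. -/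
def IsOverlapAmbiguity (k : Type*) [Field k] {n : ℕ} (G : Set (FreeAlg k n))
    (g₁ g₂ : FreeAlg k n) (w₁ w₂ : Word n) : Prop :=
  g₁ ∈ G ∧ g₂ ∈ G ∧ g₁ ≠ 0 ∧ g₂ ≠ 0 ∧ ¬(w₁ = 1 ∧ w₂ = 1) ∧
    ∃ t₁ t₂ : Word n, IsTip k g₁ t₁ ∧ IsTip k g₂ t₂ ∧ t₁ * w₂ = w₁ * t₂ ∧
      ¬WDvd t₂ w₂ ∧ ¬WDvd t₁ w₁

/-- The overlap ambiguity `(g₁, g₂, w₁, w₂)` of `G` resolves. -/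
def OverlapAmbiguityResolves (k : Type*) [Field k] {n : ℕ} (G : Set (FreeAlg k n))
    (g₁ g₂ : FreeAlg k n) (w₁ w₂ : Word n) : Prop :=
  ∀ t₁ t₂ : Word n, IsTip k g₁ t₁ → IsTip k g₂ t₂ →
    ∃ φ₁ φ₂ : FreeAlg k n →ₗ[k] FreeAlg k n, IsReduction k G φ₁ ∧ IsReduction k G φ₂ ∧
      φ₁ ((wd k t₁ - (g₁.coeff t₁)⁻¹ • g₁) * wd k w₂) = φ₂ (wd k w₁ * (wd k t₂ - (g₂.coeff t₂)⁻¹ • g₂))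

/-! ### Gröbner bases -/

/-- `G` is a Gröbner basis of the two-sided ideal `J` with respect to the order: `G ⊆ J` and
the tip of every nonzero element of `J` is divisible by the tip of some nonzero element
of `G`. -/
def IsGroebner (k : Type*) [Field k] {n : ℕ} (G : Set (FreeAlg k n))
    (J : TwoSidedIdeal (FreeAlg k n)) : Prop :=
  (∀ g ∈ G, g ∈ J) ∧
    ∀ f : FreeAlg k n, f ∈ J → f ≠ 0 → ∀ t : Word n, IsTip k f t →
      ∃ g ∈ G, g ≠ 0 ∧ ∃ tg : Word n, IsTip k g tg ∧ WDvd tg t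

/-- A minimal Gröbner basis: `0 ∉ G` and the tip of no element of `G` divides the tip of a
different element of `G`. -/
def IsMinimalGroebner (k : Type*) [Field k] {n : ℕ} (G : Set (FreeAlg k n))
    (J : TwoSidedIdeal (FreeAlg k n)) : Prop :=
  IsGroebner k G J ∧ (0 : FreeAlg k n) ∉ G ∧
    ∀ g ∈ G, ∀ g' ∈ G, g ≠ g' → ∀ t t' : Word n, IsTip k g t → IsTip k g' t' → ¬WDvd t t'

/-- A reduced Gröbner basis: minimal, every element has leading coefficient `1`, and the tip of
no element of `G` divides a word occurring with nonzero coefficient in a different element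
of `G`. -/
def IsReducedGroebner (k : Type*) [Field k] {n : ℕ} (G : Set (FreeAlg k n))
    (J : TwoSidedIdeal (FreeAlg k n)) : Prop :=
  IsMinimalGroebner k G J ∧ (∀ g ∈ G, ∀ t : Word n, IsTip k g t → g.coeff t = 1) ∧
    ∀ g ∈ G, ∀ g' ∈ G, g ≠ g' → ∀ t : Word n, IsTip k g t →
      ∀ w : Word n, g'.coeff w ≠ 0 → ¬WDvd t w

/-! ### Monoidal ideals -/

/-- A monoidal ideal of the free monoid of words: a set of words containing all multiples of
its elements. -/
def IsMonIdeal {n : ℕ} (M : Set (Word n)) : Prop :=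
  ∀ w ∈ M, ∀ w₁ w₂ : Word n, w₁ * w * w₂ ∈ M

/-- `N` generates `M` as a monoidal ideal: `M` is the smallest monoidal ideal containing `N`. -/
def GeneratesMonIdeal {n : ℕ} (N M : Set (Word n)) : Prop :=
  IsMonIdeal M ∧ N ⊆ M ∧ ∀ M' : Set (Word n), IsMonIdeal M' → N ⊆ M' → M ⊆ M'

/-! ### Chain words -/

/-- `v^{[ℓ]}`: equal to `v` for odd `ℓ` and to `v^δ` for even `ℓ`. -/
def pw {n : ℕ} (l : ℕ) (v : Mat n) : Mat n := if l % 2 = 1 then v else mD v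

/-- The word `v^{(ℓ)}_{j,i}` (for `ℓ ≥ 1`). -/
def chainWord (n : ℕ) (hn : 2 ≤ n) (v : Mat n) (l : ℕ) (j i : Fin n) : Word n :=
  if l = 1 then FreeMonoid.of (v j i.rev)
  else if l % 2 = 0 then
    FreeMonoid.of (v j (finN n hn)) *
      (FreeMonoid.of (mD v (fin1 n hn) (finN n hn)) *
          FreeMonoid.of (v (fin1 n hn) (finN n hn))) ^ ((l - 2) / 2) *
      FreeMonoid.of (mD v (fin1 n hn) i.rev)
  else
    FreeMonoid.of (v j (finN n hn)) *
      (FreeMonoid.of (mD v (fin1 n hn) (finN n hn)) *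
          FreeMonoid.of (v (fin1 n hn) (finN n hn))) ^ ((l - 3) / 2) *
      FreeMonoid.of (mD v (fin1 n hn) (finN n hn)) * FreeMonoid.of (v (fin1 n hn) i.rev)

/-- The set `C_ℓ = {v^{(ℓ)}_{j,i} : v ∈ V, (j,i) ∈ {1,…,n}²}` of `ℓ`-chains. -/
def Cset (n : ℕ) (hn : 2 ≤ n) (l : ℕ) : Set (Word n) :=
  {w | ∃ v ∈ V n, ∃ j i : Fin n, w = chainWord n hn v l j i}

/-! ### The quotient algebra `A = F/I`, the counit and the modules of the resolution -/

/-- The relation identifying each element of `R` with `0`; the induced ring congruence realizes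
the quotient `A = F/I` by the two-sided ideal `I` generated by `R`. -/
def relR (k : Type*) [Field k] (n : ℕ) : FreeAlg k n → FreeAlg k n → Prop :=
  fun a b => a ∈ rels k n ∧ b = 0

/-- The `k`-algebra `A = F/I`. -/
abbrev Aq (k : Type*) [Field k] (n : ℕ) := RingQuot (relR k n)

/-- The quotient map `F → A = F/I`. -/
noncomputable def pr (k : Type*) [Field k] (n : ℕ) : FreeAlg k n →ₐ[k] Aq k n :=
  RingQuot.mkAlgHom k (relR k n)

/-- The class `v_{j,i} + I ∈ A` of a generator. -/
noncomputable def gen (k : Type*) [Field k] {n : ℕ} (v : Mat n) (j i : Fin n) : Aq k n :=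
  pr k n (wd k (FreeMonoid.of (v j i)))

/-- The ring homomorphism `Aᵐᵒᵖ →+* k` induced by `ε` (using the commutativity of `k`). -/
noncomputable def epsOp (k : Type*) [Field k] (n : ℕ) (ε : Aq k n →ₐ[k] k) :
    (Aq k n)ᵐᵒᵖ →+* k where
  toFun a := ε a.unop
  map_one' := by simp
  map_mul' a b := by simp [mul_comm]
  map_zero' := by simp
  map_add' a b := by simp

/-- The right `A`-module `k_ε`: the field `k` with the right `A`-action induced by `ε`,
realized as a left module over the opposite algebra `Aᵐᵒᵖ`. -/
def KE (k : Type*) [Field k] (n : ℕ) (_ε : Aq k n →ₐ[k] k) : Type _ := k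

instance (k : Type*) [Field k] (n : ℕ) (ε : Aq k n →ₐ[k] k) : AddCommGroup (KE k n ε) :=
  inferInstanceAs (AddCommGroup k)

instance (k : Type*) [Field k] (n : ℕ) (ε : Aq k n →ₐ[k] k) : Module k (KE k n ε) :=
  inferInstanceAs (Module k k)

instance (k : Type*) [Field k] (n : ℕ) (ε : Aq k n →ₐ[k] k) : One (KE k n ε) := ⟨(1 : k)⟩

noncomputable instance (k : Type*) [Field k] (n : ℕ) (ε : Aq k n →ₐ[k] k) :
    Module ((Aq k n)ᵐᵒᵖ) (KE k n ε) :=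
  Module.compHom k (epsOp k n ε)

instance (k : Type*) [Field k] (n : ℕ) (ε : Aq k n →ₐ[k] k) :
    SMulCommClass ((Aq k n)ᵐᵒᵖ) k (KE k n ε) :=
  ⟨fun a c x => by
    show epsOp k n ε a • (c • x) = c • (epsOp k n ε a • x)
    rw [smul_smul, smul_smul, mul_comm]⟩

/-- The free right `A`-module `P_ℓ = kC_ℓ ⊗ₖ A` with basis `C_ℓ` (for `ℓ ≥ 1`), realized as a
left module over the opposite algebra `Aᵐᵒᵖ`. -/
abbrev Pmod (k : Type*) [Field k] (n : ℕ) (hn : 2 ≤ n) (l : ℕ) :=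
  ↥(Cset n hn l) →₀ Aq k n

/-- The element `v^{(ℓ)}_{j,i} ⊗ a` of `P_ℓ`. -/
noncomputable def bas (k : Type*) [Field k] (n : ℕ) (hn : 2 ≤ n) (l : ℕ) (v : Mat n)
    (hv : v ∈ V n) (j i : Fin n) (a : Aq k n) : Pmod k n hn l :=
  Finsupp.single ⟨chainWord n hn v l j i, ⟨v, hv, j, i, rfl⟩⟩ a

/-- Pre-composition with a homomorphism of right `A`-modules, as the `k`-linear map
`Hom_A(N, k_ε) → Hom_A(M, k_ε)`, `g ↦ g ∘ d`. -/
noncomputable def homMap (k : Type*) [Field k] {n : ℕ} (ε : Aq k n →ₐ[k] k) {M N : Type*}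
    [AddCommMonoid M] [AddCommMonoid N] [Module ((Aq k n)ᵐᵒᵖ) M] [Module ((Aq k n)ᵐᵒᵖ) N]
    (d : M →ₗ[(Aq k n)ᵐᵒᵖ] N) :
    (N →ₗ[(Aq k n)ᵐᵒᵖ] KE k n ε) →ₗ[k] (M →ₗ[(Aq k n)ᵐᵒᵖ] KE k n ε) where
  toFun g := g.comp d
  map_add' _ _ := LinearMap.ext fun _ => rfl
  map_smul' _ _ := LinearMap.ext fun _ => rfl

/-- The right-hand side of the defining formula for `d₂` on the basis element
`v^{(2)}_{j,i} ⊗ 1`. -/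
noncomputable def d2RHS (k : Type*) [Field k] (n : ℕ) (hn : 2 ≤ n) (v : Mat n)
    (hv : v ∈ V n) (j i : Fin n) : Pmod k n hn 1 :=
  (∑ s : Fin n, bas k n hn 1 v hv j s (gen k (mD v) s i.rev))
    + bas k n hn 1 (mD v) (V_mD hv) j.rev i 1
    - (if j = finN n hn ∧ i = finN n hn then
        ∑ s ∈ Finset.univ.filter (fun s : Fin n => s ≠ fin1 n hn),
          ((∑ t : Fin n, bas k n hn 1 v hv t s (gen k (mD v) s t.rev))
            + bas k n hn 1 (mD v) (V_mD hv) s s.rev 1)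
      else 0)

/-- The right-hand side of the defining formula for `d_ℓ`, `ℓ ≥ 3`, on the basis element
`v^{(ℓ)}_{j,i} ⊗ 1`. -/
noncomputable def dTail (k : Type*) [Field k] (n : ℕ) (hn : 2 ≤ n) (l : ℕ) (v : Mat n)
    (hv : v ∈ V n) (j i : Fin n) : Pmod k n hn (l - 1) :=
  (∑ s : Fin n, bas k n hn (l - 1) v hv j s (gen k (pw l v) s i.rev))
    + bas k n hn (l - 1) (mD v) (V_mD hv) j.rev i ((-1 : Aq k n) ^ l)
    + (if j = finN n hn then
        ((bas k n hn (l - 1) (mT v) (V_mT hv) (fin1 n hn) (fin1 n hn)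
              (gen k (pw l (mT v)) i.rev (finN n hn))
            + (if l = 3 then
                ∑ s ∈ Finset.univ.filter (fun s : Fin n => s ≠ fin1 n hn ∧ s ≠ finN n hn),
                  bas k n hn (l - 1) (mT v) (V_mT hv) s s (gen k (pw l (mT v)) i.rev (finN n hn))
              else 0))
          - (if i = finN n hn then
              (∑ s : Fin n, bas k n hn (l - 1) (mT v) (V_mT hv) (fin1 n hn) s
                  (gen k (pw l (mT v)) s (finN n hn)))
                + bas k n hn (l - 1) (mS v) (V_mS hv) (finN n hn) (fin1 n hn) ((-1 : Aq k n) ^ l)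
            else 0))
      else 0)
    + (if j = fin1 n hn ∧ i = finN n hn then
        bas k n hn (l - 1) (mS v) (V_mS hv) (fin1 n hn) (fin1 n hn) ((-1 : Aq k n) ^ l)
          + (if l = 3 then
              ∑ s ∈ Finset.univ.filter (fun s : Fin n => s ≠ fin1 n hn ∧ s ≠ finN n hn),
                bas k n hn (l - 1) (mS v) (V_mS hv) s s ((-1 : Aq k n) ^ l)
            else 0)
      else 0)

/-- The system of identities from STATEMENT 14, for a fixed `v ∈ V`. -/
noncomputable def cond14 (k : Type*) [Field k] {n : ℕ} (hn : 2 ≤ n) (ε : Aq k n →ₐ[k] k)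
    (g : Pmod k n hn 1 →ₗ[(Aq k n)ᵐᵒᵖ] KE k n ε) (v : Mat n) (hv : v ∈ V n) : Prop :=
  ∀ j i : Fin n, g (bas k n hn 1 (mS v) (V_mS hv) j i 1) = -g (bas k n hn 1 v hv i j 1)

/-- The system of identities (1)–(4) from STATEMENT 16, for a fixed `v ∈ V`. -/
noncomputable def cond16 (k : Type*) [Field k] {n : ℕ} (hn : 2 ≤ n) (ε : Aq k n →ₐ[k] k)
    (l : ℕ) (g : Pmod k n hn (l - 1) →ₗ[(Aq k n)ᵐᵒᵖ] KE k n ε) (v : Mat n)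
    (hv : v ∈ V n) : Prop :=
  (∀ j i : Fin n, (j, i) ≠ (fin1 n hn, fin1 n hn) →
      g (bas k n hn (l - 1) (mT v) (V_mT hv) j i 1) =
        -(((-1 : k) ^ l) • g (bas k n hn (l - 1) (mS v) (V_mS hv) j.rev i.rev 1))
          - (if j = finN n hn ∧ i = finN n hn then
              g (bas k n hn (l - 1) v hv (fin1 n hn) (fin1 n hn) 1)
                + (if l = 3 then
                    ∑ s ∈ Finset.univ.filter (fun s : Fin n => s ≠ fin1 n hn ∧ s ≠ finN n hn),
                      g (bas k n hn (l - 1) v hv s s 1)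
                  else 0)
            else 0)) ∧
  (∀ j i : Fin n, (j, i) ≠ (fin1 n hn, fin1 n hn) →
      g (bas k n hn (l - 1) (mD v) (V_mD hv) j i 1) =
        -(((-1 : k) ^ l) • g (bas k n hn (l - 1) v hv j.rev i.rev 1))
          - (if j = finN n hn ∧ i = finN n hn then
              g (bas k n hn (l - 1) (mS v) (V_mS hv) (fin1 n hn) (fin1 n hn) 1)
                + (if l = 3 then
                    ∑ s ∈ Finset.univ.filter (fun s : Fin n => s ≠ fin1 n hn ∧ s ≠ finN n hn),
                      g (bas k n hn (l - 1) (mS v) (V_mS hv) s s 1)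
                  else 0)
            else 0)) ∧
  (g (bas k n hn (l - 1) (mD v) (V_mD hv) (fin1 n hn) (fin1 n hn) 1) =
      -(((-1 : k) ^ l) • g (bas k n hn (l - 1) (mT v) (V_mT hv) (fin1 n hn) (fin1 n hn) 1))
        - ((-1 : k) ^ l) • g (bas k n hn (l - 1) v hv (finN n hn) (finN n hn) 1)
        + (if l = 3 then
            ∑ s ∈ Finset.univ.filter (fun s : Fin n => s ≠ fin1 n hn ∧ s ≠ finN n hn),
              g (bas k n hn (l - 1) (mS v) (V_mS hv) s s 1)
          else 0)) ∧
  (g (bas k n hn (l - 1) (mS v) (V_mS hv) (finN n hn) (finN n hn) 1) =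
      -(if l = 3 then
          ∑ s ∈ Finset.univ.filter (fun s : Fin n => s ≠ fin1 n hn ∧ s ≠ finN n hn),
            g (bas k n hn (l - 1) (mS v) (V_mS hv) s s 1)
        else 0)
        + ((-1 : k) ^ l) • (g (bas k n hn (l - 1) v hv (finN n hn) (finN n hn) 1)
            + (if l = 3 then
                ∑ s ∈ Finset.univ.filter (fun s : Fin n => s ≠ fin1 n hn ∧ s ≠ finN n hn),
                  g (bas k n hn (l - 1) v hv s s 1)
              else 0)))

end UnPlusAnick

/-!
Every letter `c` is a `1`-chain, and `g (c ⊗ a) = ε(a) g (c ⊗ 1)`, so `g : P₁ → k_ε` is determined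
by its values `G` on the letters. Since `ε` is `δ` on the generators, every sum in `d₂` collapses to
a single term: `g (d₂ (v^{(2)}_{j,i} ⊗ 1)) = G(v_{j,i}) + G(v_{i,j}^*)`, minus, at the corner
`(j,i) = (n,n)`, a sum of such expressions at off-corner indices. Hence `g ∘ d₂ = 0` iff
`G(v_{p,q}) + G(v_{q,p}^*) = 0` for all `p, q`, which is again the system
`g^{v^σ}_{j,i} = -g^v_{i,j}`. This condition is invariant under `v ↦ vᵀ` and `v ↦ v^σ`, and these
maps generate `V` from `u`, so it is the same condition for every `v ∈ V`.
-/

theorem Finsupp.single_eq_op_smul_single_one {R α : Type*} [Semiring R] (c : α) (a : R) :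
    Finsupp.single c a = MulOpposite.op a • Finsupp.single c (1 : R) := by
  rw [Finsupp.smul_single, MulOpposite.smul_eq_mul_unop, MulOpposite.unop_op, one_mul]

theorem Finsupp.opLinearMap_ext {R α M : Type*} [Semiring R] [AddCommMonoid M] [Module Rᵐᵒᵖ M]
    ⦃f f' : (α →₀ R) →ₗ[Rᵐᵒᵖ] M⦄ (h : ∀ c, f (Finsupp.single c 1) = f' (Finsupp.single c 1)) :
    f = f' :=
  Finsupp.lhom_ext fun c a => by
    rw [Finsupp.single_eq_op_smul_single_one, map_smul, map_smul, h]

theorem forall_sub_ite_sum_eq_zero_iff {ι κ M : Type*} [DecidableEq ι] [AddCommGroup M]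
    (f : ι → ι → M) (N : ι) (T : Finset κ) (e : κ → ι) (he : ∀ s ∈ T, e s ≠ N) :
    (∀ j i, f j i - (if j = N ∧ i = N then ∑ s ∈ T, f (e s) (e s) else 0) = 0) ↔
      ∀ j i, f j i = 0 := by
  constructor
  · intro h
    have off : ∀ j i, ¬(j = N ∧ i = N) → f j i = 0 := fun j i hji => by
      simpa [hji] using h j i
    intro j i
    by_cases hji : j = N ∧ i = N
    · have := h j i
      rwa [if_pos hji, Finset.sum_eq_zero fun s hs => off _ _ fun h' => he s hs h'.1,
        sub_zero] at this
    · exact off j i hji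
  · intro h j i
    simp [h]

namespace UnPlusAnick

section SkewOnLetters

variable {n : ℕ} {M : Type*} [AddCommMonoid M]

/-- With `G` the values of `g` on the letters, this is the system
`g^{v^σ}_{σ(q),p} = -g^v_{p,σ(q)}`: `v_{p,q}` and `(v_{q,p})^*` are the letters
`v^{(1)}_{p,σ(q)}` and `(v^σ)^{(1)}_{σ(q),p}`. -/
def IsSkewOn (G : Gen n → M) (v : Mat n) : Prop :=
  ∀ p q : Fin n, G (v p q) + G (genStar (v q p)) = 0

theorem isSkewOn_mT_iff (G : Gen n → M) (v : Mat n) : IsSkewOn G (mT v) ↔ IsSkewOn G v :=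
  ⟨fun h p q => h q p, fun h p q => h q p⟩

theorem isSkewOn_mS_iff (G : Gen n → M) (v : Mat n) : IsSkewOn G (mS v) ↔ IsSkewOn G v := by
  refine ⟨fun h p q => ?_, fun h p q => ?_⟩ <;>
    simpa only [IsSkewOn, mS, genStar_genStar, Fin.rev_rev, add_comm] using h q.rev p.rev

theorem isSkewOn_iff_of_mem_V (G : Gen n → M) {v : Mat n} (hv : v ∈ V n) :
    IsSkewOn G v ↔ IsSkewOn G (uMat n) := by
  simp only [V, Set.mem_insert_iff, Set.mem_singleton_iff] at hv
  rcases hv with rfl | rfl | rfl | rfl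
  · rfl
  · exact isSkewOn_mT_iff G _
  · exact isSkewOn_mS_iff G _
  · exact (isSkewOn_mT_iff G (mS _)).trans (isSkewOn_mS_iff G _)

end SkewOnLetters

section CochainsOnP1

variable {k : Type*} [Field k] {n : ℕ} (hn : 2 ≤ n) {ε : Aq k n →ₐ[k] k}

theorem of_mem_Cset_one (c : Gen n) : FreeMonoid.of c ∈ Cset n hn 1 := by
  obtain ⟨_ | _, a, i⟩ := c
  · exact ⟨uMat n, Or.inl rfl, a, i.rev, by simp [chainWord, uMat]⟩
  · exact ⟨mS (uMat n), Or.inr (Or.inr (Or.inl rfl)), a.rev, i,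
      by simp [chainWord, mS, uMat, genStar]⟩

noncomputable def letterVal (g : Pmod k n hn 1 →ₗ[(Aq k n)ᵐᵒᵖ] KE k n ε) (c : Gen n) :
    KE k n ε :=
  g (Finsupp.single ⟨FreeMonoid.of c, of_mem_Cset_one hn c⟩ 1)

variable {hn}

theorem map_bas_one (g : Pmod k n hn 1 →ₗ[(Aq k n)ᵐᵒᵖ] KE k n ε) {v : Mat n}
    (hv : v ∈ V n) (j i : Fin n) (a : Aq k n) :
    g (bas k n hn 1 v hv j i a) = ε a • letterVal hn g (v j i.rev) := by
  rw [bas, Finsupp.single_eq_op_smul_single_one, map_smul]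
  rfl

theorem map_bas_one_gen
    (hε : ∀ v ∈ V n, ∀ j i : Fin n, ε (gen k v j i) = if j = i then 1 else 0)
    (g : Pmod k n hn 1 →ₗ[(Aq k n)ᵐᵒᵖ] KE k n ε) {v w : Mat n} (hv : v ∈ V n) (hw : w ∈ V n)
    (j i p q : Fin n) :
    g (bas k n hn 1 v hv j i (gen k w p q)) =
      if p = q then letterVal hn g (v j i.rev) else 0 := by
  rw [map_bas_one, hε w hw]
  split_ifs <;> simp

theorem map_d2RHS
    (hε : ∀ v ∈ V n, ∀ j i : Fin n, ε (gen k v j i) = if j = i then 1 else 0)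
    (g : Pmod k n hn 1 →ₗ[(Aq k n)ᵐᵒᵖ] KE k n ε) {v : Mat n} (hv : v ∈ V n) (j i : Fin n) :
    g (d2RHS k n hn v hv j i) =
      (letterVal hn g (v j i) + letterVal hn g (genStar (v i j)))
        - (if j = finN n hn ∧ i = finN n hn then
            ∑ s ∈ Finset.univ.filter (fun s : Fin n => s ≠ fin1 n hn),
              (letterVal hn g (v s.rev s.rev) + letterVal hn g (genStar (v s.rev s.rev)))
          else 0) := by
  rw [d2RHS, map_sub g, map_add g, map_sum, apply_ite g, map_zero, map_sum]
  simp only [map_add g, map_sum, map_bas_one_gen hε g hv (V_mD hv), map_bas_one, map_one,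
    one_smul, mD, Fin.rev_rev, Finset.sum_ite_eq', Finset.mem_univ, if_true]
  simp only [← Fin.rev_involutive.eq_iff, Finset.sum_ite_eq, Finset.mem_univ, if_true]

theorem map_d2RHS_eq_zero_iff
    (hε : ∀ v ∈ V n, ∀ j i : Fin n, ε (gen k v j i) = if j = i then 1 else 0)
    (g : Pmod k n hn 1 →ₗ[(Aq k n)ᵐᵒᵖ] KE k n ε) {v : Mat n} (hv : v ∈ V n) :
    (∀ j i, g (d2RHS k n hn v hv j i) = 0) ↔ IsSkewOn (letterVal hn g) v := by
  simp only [map_d2RHS hε g hv]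
  refine forall_sub_ite_sum_eq_zero_iff
    (fun p q => letterVal hn g (v p q) + letterVal hn g (genStar (v q p))) (finN n hn) _ Fin.rev
    fun s hs hsN => (Finset.mem_filter.mp hs).2 ?_
  rw [← Fin.rev_rev s, hsN]
  ext
  simp [finN, fin1]
  omega

theorem cond14_iff_isSkewOn (g : Pmod k n hn 1 →ₗ[(Aq k n)ᵐᵒᵖ] KE k n ε) {v : Mat n}
    (hv : v ∈ V n) : cond14 k hn ε g v hv ↔ IsSkewOn (letterVal hn g) v := by
  simp only [cond14, IsSkewOn, map_bas_one, map_one, one_smul, mS, Fin.rev_rev,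
    eq_neg_iff_add_eq_zero]
  exact ⟨fun h p q => by simpa [add_comm] using h q.rev p,
    fun h j i => by simpa [add_comm] using h i j.rev⟩

theorem eq_zero_iff_forall_bas {M : Type*} [AddCommMonoid M] [Module (Aq k n)ᵐᵒᵖ M] {l : ℕ}
    (f : Pmod k n hn l →ₗ[(Aq k n)ᵐᵒᵖ] M) :
    f = 0 ↔ ∀ (v : Mat n) (hv : v ∈ V n) (j i : Fin n), f (bas k n hn l v hv j i 1) = 0 := by
  refine ⟨fun h v hv j i => by rw [h, LinearMap.zero_apply], fun h => ?_⟩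
  refine Finsupp.opLinearMap_ext fun ⟨_, v, hv, j, i, hc⟩ => ?_
  subst hc
  exact h v hv j i

end CochainsOnP1

theorem statement_14 (k : Type*) [Field k] (n : ℕ) (hn : 2 ≤ n)
    (ε : Aq k n →ₐ[k] k)
    (hε : ∀ v ∈ V n, ∀ j i : Fin n, ε (gen k v j i) = if j = i then 1 else 0)
    (d2 : Pmod k n hn 2 →ₗ[(Aq k n)ᵐᵒᵖ] Pmod k n hn 1)
    (hd2 : ∀ (v : Mat n) (hv : v ∈ V n) (j i : Fin n),
      d2 (bas k n hn 2 v hv j i 1) = d2RHS k n hn v hv j i)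
    (g : Pmod k n hn 1 →ₗ[(Aq k n)ᵐᵒᵖ] KE k n ε) :
    (g.comp d2 = 0 ↔ ∀ (v : Mat n) (hv : v ∈ V n), cond14 k hn ε g v hv) ∧
      ∀ (v : Mat n) (hv : v ∈ V n), cond14 k hn ε g v hv →
        ∀ (w : Mat n) (hw : w ∈ V n), cond14 k hn ε g w hw := by
  have cond14_iff : ∀ v (hv : v ∈ V n),
      cond14 k hn ε g v hv ↔ IsSkewOn (letterVal hn g) (uMat n) := fun v hv =>
    (cond14_iff_isSkewOn g hv).trans (isSkewOn_iff_of_mem_V _ hv)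
  have comp_d2_eq_zero_iff : g.comp d2 = 0 ↔ ∀ v ∈ V n, IsSkewOn (letterVal hn g) v := by
    simp only [eq_zero_iff_forall_bas, LinearMap.comp_apply, hd2]
    exact forall₂_congr fun v hv => map_d2RHS_eq_zero_iff hε g hv
  refine ⟨comp_d2_eq_zero_iff.trans (forall₂_congr fun v hv => ?_), fun v hv h w hw => ?_⟩
  · exact (isSkewOn_iff_of_mem_V _ hv).trans (cond14_iff v hv).symm
  · exact (cond14_iff w hw).2 ((cond14_iff v hv).1 h)

end UnPlusAnick
end

section
/- The k-linear map Hom_A(P_2, k_ε) → Hom_A(P_3, k_ε), g ↦ g ∘ d_3, has kernel of k-dimension 2n² − 1 and image of k-dimension 2n² − 1. -/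
/-!
Common setting (from the paper "The Anick resolution of the co-unit of the free unitary
quantum group", arXiv:2403.06663):

`k` is a field and `n ≥ 2`.  `S` is the set of `2n²` generators `u∘_{j,i}, u•_{j,i}`,
`(j,i) ∈ {1,…,n}²`, with the involution `*` exchanging `u∘_{j,i}` and `u•_{j,i}`.
Indices are realized `0`-based as elements of `Fin n` (so the index `1` is `fin1 = 0`,
the index `n` is `finN = n-1`, and `σ(i) = n-i+1` is `Fin.rev`).
-/

namespace UnPlusAnick

/-!
Evaluation on the basis identifies `Hom_A(P₂, k_ε)` with the functions on `C₂`, a set of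
`4n² - 2` words: the `2`-chains of `u`, `uᵀ`, `u^σ`, `u^δ`, where `(uᵀ)^{(2)}_{n,n} = u^{(2)}_{n,n}`
and `(u^δ)^{(2)}_{n,n} = (u^σ)^{(2)}_{n,n}`. Since `ε` kills the off-diagonal generators,
`g ∘ d₃ = 0` is a system of linear equations in the values of `g`. Those for `v = u` and
`v = uᵀ` can be solved for the values on the `2`-chains of `u^σ` and `u^δ` in terms of the values
on the `2`-chains of `u` and `uᵀ`, and the solution also satisfies the equations for `v = u^σ`
and `v = u^δ`. So restricting to the `2n² - 1` chains that begin with a white letter is an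
isomorphism on the kernel, and rank–nullity gives the dimension of the image.
-/

section Indices

variable {n : ℕ} (hn : 2 ≤ n)

@[simp]
theorem fin1_rev : (fin1 n hn).rev = finN n hn := by
  ext
  simp [fin1, finN, Fin.val_rev]

@[simp]
theorem finN_rev : (finN n hn).rev = fin1 n hn := by
  rw [← fin1_rev hn, Fin.rev_rev]

theorem fin1_ne_finN : fin1 n hn ≠ finN n hn := by
  simp only [fin1, finN, ne_eq, Fin.mk.injEq]
  omega

@[simp]
theorem rev_eq_finN_iff {i : Fin n} : i.rev = finN n hn ↔ i = fin1 n hn := by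
  rw [← fin1_rev hn, Fin.rev_inj]

@[simp]
theorem rev_eq_fin1_iff {i : Fin n} : i.rev = fin1 n hn ↔ i = finN n hn := by
  rw [← finN_rev hn, Fin.rev_inj]

@[simp]
theorem fin1_eq_rev_iff {i : Fin n} : fin1 n hn = i.rev ↔ i = finN n hn := by
  rw [eq_comm, rev_eq_fin1_iff]

theorem eq_fin1_or_eq_finN_or (i : Fin n) :
    i = fin1 n hn ∨ i = finN n hn ∨ (i ≠ fin1 n hn ∧ i ≠ finN n hn) := by
  tauto

theorem sum_filter_ne_fin1_finN {M : Type*} [AddCommGroup M] (f : Fin n → M) :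
    ∑ s ∈ Finset.univ.filter (fun s : Fin n => s ≠ fin1 n hn ∧ s ≠ finN n hn), f s
      = ∑ s, f s - f (fin1 n hn) - f (finN n hn) := by
  rw [Finset.filter_and, Finset.filter_ne', Finset.filter_ne', Finset.erase_inter,
    Finset.univ_inter, Finset.sum_erase_eq_sub (by simp [fin1_ne_finN hn]),
    Finset.sum_erase_eq_sub (Finset.mem_univ _)]
  abel

end Indices

section MatrixEquations

variable {R : Type*} [CommRing R] {n : ℕ} (hn : 2 ≤ n)

/-- The value of `g ∘ d₃` at `v^{(3)}_{j,i} ⊗ 1`, when `g` takes the values `A`, `B`, `C`, `D`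
at the `2`-chains of `v`, `v^δ`, `vᵀ`, `v^σ`. -/
def pullbackD3 (A B C D : Matrix (Fin n) (Fin n) R) (j i : Fin n) : R :=
  A j i.rev - B j.rev i
    + (if j = finN n hn then
        (if i = fin1 n hn then C.trace - C (finN n hn) (finN n hn) else 0)
          - (if i = finN n hn then C (fin1 n hn) (finN n hn) - D (finN n hn) (fin1 n hn) else 0)
      else 0)
    - (if j = fin1 n hn ∧ i = finN n hn then D.trace - D (finN n hn) (finN n hn) else 0)

/-- The values at the `2`-chains of `u^σ` forced on a cocycle with values `x`, `y` at the
`2`-chains of `u`, `uᵀ`; its values at the `2`-chains of `u^δ` are `kerSigma hn y x`. -/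
def kerSigma (x y : Matrix (Fin n) (Fin n) R) : Matrix (Fin n) (Fin n) R := fun a b =>
  y a.rev b.rev + (if a = fin1 n hn ∧ b = fin1 n hn then x.trace - x (finN n hn) (finN n hn) else 0)
    - (if a = finN n hn ∧ b = finN n hn then
        x.trace - x (fin1 n hn) (fin1 n hn) + y.trace - y (finN n hn) (finN n hn) else 0)

theorem sum_diag_rev (y : Matrix (Fin n) (Fin n) R) : ∑ a : Fin n, y a.rev a.rev = ∑ a, y a a :=
  Equiv.sum_comp Fin.revPerm fun a => y a a

theorem trace_kerSigma (x y : Matrix (Fin n) (Fin n) R) :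
    (kerSigma hn x y).trace
      = x (fin1 n hn) (fin1 n hn) - x (finN n hn) (finN n hn) + y (finN n hn) (finN n hn) := by
  simp only [Matrix.trace, Matrix.diag, kerSigma, and_self, Finset.sum_add_distrib,
    Finset.sum_sub_distrib, Finset.sum_ite_eq', Finset.mem_univ, if_true, sum_diag_rev]
  ring

theorem kerSigma_finN_finN_comm {x y : Matrix (Fin n) (Fin n) R}
    (h : y (finN n hn) (finN n hn) = x (finN n hn) (finN n hn)) :
    kerSigma hn x y (finN n hn) (finN n hn) = kerSigma hn y x (finN n hn) (finN n hn) := by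
  simp only [kerSigma, finN_rev, (fin1_ne_finN hn).symm, and_self, if_true, if_false]
  linear_combination h

theorem kerSigma_zero : kerSigma hn (0 : Matrix (Fin n) (Fin n) R) 0 = 0 := by
  ext a b
  simp [kerSigma]

theorem pullbackD3_kerSigma_left (x y : Matrix (Fin n) (Fin n) R) (j i : Fin n) :
    pullbackD3 hn x (kerSigma hn y x) y (kerSigma hn x y) j i = 0 := by
  have h1N := fin1_ne_finN hn
  rcases eq_fin1_or_eq_finN_or hn j with rfl | rfl | ⟨hj1, hjN⟩ <;>
    rcases eq_fin1_or_eq_finN_or hn i with rfl | rfl | ⟨hi1, hiN⟩ <;>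
    simp only [pullbackD3, trace_kerSigma, kerSigma, Fin.rev_rev, fin1_rev, finN_rev,
      rev_eq_fin1_iff, rev_eq_finN_iff, h1N.symm, and_self, false_and, and_false, if_true,
      if_false, *] <;>
    ring

theorem pullbackD3_kerSigma_right (x y : Matrix (Fin n) (Fin n) R) (j i : Fin n) :
    pullbackD3 hn (kerSigma hn x y) y (kerSigma hn y x) x j i = 0 := by
  have h1N := fin1_ne_finN hn
  rcases eq_fin1_or_eq_finN_or hn j with rfl | rfl | ⟨hj1, hjN⟩ <;>
    rcases eq_fin1_or_eq_finN_or hn i with rfl | rfl | ⟨hi1, hiN⟩ <;>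
    simp only [pullbackD3, trace_kerSigma, kerSigma, Fin.rev_rev, fin1_rev, finN_rev,
      rev_eq_fin1_iff, rev_eq_finN_iff, h1N.symm, and_self, false_and, and_false, if_true,
      if_false, *] <;>
    ring

variable {hn} {x y z w : Matrix (Fin n) (Fin n) R}

theorem corner_eq_of_pullbackD3 (hx : ∀ j i, pullbackD3 hn x w y z j i = 0) :
    w (finN n hn) (fin1 n hn) = x (fin1 n hn) (finN n hn) := by
  have h := hx (fin1 n hn) (fin1 n hn)
  simp only [pullbackD3, fin1_rev, fin1_ne_finN hn, and_false, if_false, add_zero, sub_zero] at h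
  linear_combination -h

theorem entry_eq_of_pullbackD3 (hx : ∀ j i, pullbackD3 hn x w y z j i = 0)
    (hz : z (finN n hn) (fin1 n hn) = y (fin1 n hn) (finN n hn)) (a b : Fin n) :
    w a b = x a.rev b.rev
      + (if a = fin1 n hn ∧ b = fin1 n hn then y.trace - y (finN n hn) (finN n hn) else 0)
      - (if a = finN n hn ∧ b = finN n hn then z.trace - z (finN n hn) (finN n hn) else 0) := by
  have h := hx a.rev b
  clear hx
  have h1N := fin1_ne_finN hn
  rcases eq_fin1_or_eq_finN_or hn a with rfl | rfl | ⟨ha1, haN⟩ <;>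
    rcases eq_fin1_or_eq_finN_or hn b with rfl | rfl | ⟨hb1, hbN⟩ <;>
    simp only [pullbackD3, Fin.rev_rev, fin1_rev, finN_rev, rev_eq_fin1_iff, rev_eq_finN_iff,
      h1N.symm, and_self, false_and, and_false, if_true, if_false, sub_self, sub_zero, add_zero,
      *] at h ⊢ <;>
    linear_combination -h

theorem trace_sub_eq_of_pullbackD3 (hx : ∀ j i, pullbackD3 hn x w y z j i = 0)
    (hz : z (finN n hn) (fin1 n hn) = y (fin1 n hn) (finN n hn)) :
    w.trace - w (finN n hn) (finN n hn)
      = x.trace - x (fin1 n hn) (fin1 n hn) + y.trace - y (finN n hn) (finN n hn) := by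
  have hw := entry_eq_of_pullbackD3 hx hz
  have hNN := hw (finN n hn) (finN n hn)
  simp only [finN_rev, (fin1_ne_finN hn).symm, and_self, if_true, if_false, add_zero] at hNN
  have htr : w.trace = x.trace + (y.trace - y (finN n hn) (finN n hn))
      - (z.trace - z (finN n hn) (finN n hn)) := by
    simp only [Matrix.trace, Matrix.diag, hw, and_self, Finset.sum_sub_distrib,
      Finset.sum_add_distrib, Finset.sum_ite_eq', Finset.mem_univ, if_true, sum_diag_rev]
  linear_combination htr - hNN

theorem eq_kerSigma_of_pullbackD3 (hx : ∀ j i, pullbackD3 hn x w y z j i = 0)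
    (hy : ∀ j i, pullbackD3 hn y z x w j i = 0) : z = kerSigma hn x y := by
  have hw := corner_eq_of_pullbackD3 hx
  ext a b
  rw [entry_eq_of_pullbackD3 hy hw, trace_sub_eq_of_pullbackD3 hx (corner_eq_of_pullbackD3 hy)]
  rfl

variable (hn) in
theorem forall_pullbackD3_eq_zero_iff (M : Bool → Bool → Matrix (Fin n) (Fin n) R) :
    (∀ c b j i, pullbackD3 hn (M c b) (M (!c) (!b)) (M c (!b)) (M (!c) b) j i = 0) ↔
      M true false = kerSigma hn (M false false) (M false true) ∧
        M true true = kerSigma hn (M false true) (M false false) := by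
  constructor
  · intro h
    exact ⟨eq_kerSigma_of_pullbackD3 (h false false) (h false true),
      eq_kerSigma_of_pullbackD3 (h false true) (h false false)⟩
  · rintro ⟨hz, hw⟩ c b
    cases c <;> cases b <;> simp only [Bool.not_false, Bool.not_true, hz, hw]
    exacts [pullbackD3_kerSigma_left hn _ _, pullbackD3_kerSigma_left hn _ _,
      pullbackD3_kerSigma_right hn _ _, pullbackD3_kerSigma_right hn _ _]

end MatrixEquations

section ChainWords

variable {n : ℕ} (hn : 2 ≤ n)

theorem chainWord_two (v : Mat n) (j i : Fin n) :
    chainWord n hn v 2 j i = .of (v j (finN n hn)) * .of (genStar (v i (finN n hn))) := by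
  simp [chainWord, mD]

/-- `c` is the colour of the first letter of the `2`-chains of `vMat n c b`. -/
def vMat (n : ℕ) : Bool → Bool → Mat n
  | false, false => uMat n
  | false, true => mT (uMat n)
  | true, false => mS (uMat n)
  | true, true => mD (uMat n)

theorem vMat_mem_V (c b : Bool) : vMat n c b ∈ V n := by
  cases c <;> cases b <;> simp [vMat, V]

theorem mem_V_iff {v : Mat n} : v ∈ V n ↔ ∃ c b, vMat n c b = v := by
  constructor
  · rintro (rfl | rfl | rfl | rfl)
    exacts [⟨false, false, rfl⟩, ⟨false, true, rfl⟩, ⟨true, false, rfl⟩, ⟨true, true, rfl⟩]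
  · rintro ⟨c, b, rfl⟩
    exact vMat_mem_V c b

/-- Together with a colour `c`, indexes the `2`-chains of `vMat n c b`; `(true, n, n)` is left
out because `(uᵀ)^{(2)}_{n,n} = u^{(2)}_{n,n}` and `(u^δ)^{(2)}_{n,n} = (u^σ)^{(2)}_{n,n}`. -/
abbrev HalfIdx (n : ℕ) (hn : 2 ≤ n) :=
  {q : Bool × Fin n × Fin n // q ≠ (true, finN n hn, finN n hn)}

theorem card_halfIdx : Fintype.card (HalfIdx n hn) = 2 * n ^ 2 - 1 := by
  rw [Fintype.card_subtype_compl, Fintype.card_subtype_eq]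
  simp [Fintype.card_prod, sq]

def chainTwo (q : Bool × HalfIdx n hn) : Cset n hn 2 :=
  ⟨chainWord n hn (vMat n q.1 q.2.1.1) 2 q.2.1.2.1 q.2.1.2.2, _, vMat_mem_V _ _, _, _, rfl⟩

theorem chainTwo_injective : Function.Injective (chainTwo hn) := by
  rintro ⟨c, ⟨b, j, i⟩, h⟩ ⟨c', ⟨b', j', i'⟩, h'⟩ heq
  have hw := congrArg (fun w : Cset n hn 2 => FreeMonoid.toList w.1) heq
  simp only [chainTwo, chainWord_two, FreeMonoid.toList_mul, FreeMonoid.toList_of,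
    List.singleton_append, List.cons.injEq] at hw
  clear heq
  cases c <;> cases c' <;> cases b <;> cases b' <;>
    simp_all [vMat, uMat, mT, mS, mD, genStar]
  all_goals obtain ⟨⟨rfl, rfl⟩, rfl, rfl⟩ := hw; simp at h h'

@[simp]
theorem mT_vMat (c b : Bool) : mT (vMat n c b) = vMat n c (!b) := by
  cases c <;> cases b <;> rfl

@[simp]
theorem mS_vMat (c b : Bool) : mS (vMat n c b) = vMat n (!c) b := by
  cases c <;> cases b
  exacts [rfl, rfl, mS_mS _, mS_mD _]

@[simp]
theorem mD_vMat (c b : Bool) : mD (vMat n c b) = vMat n (!c) (!b) := by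
  cases c <;> cases b
  exacts [rfl, rfl, mD_mS _, mD_mD _]

theorem chainWord_two_vMat_true_finN (c : Bool) :
    chainWord n hn (vMat n c true) 2 (finN n hn) (finN n hn)
      = chainWord n hn (vMat n c false) 2 (finN n hn) (finN n hn) := by
  cases c <;> simp [chainWord_two, vMat, uMat, mT, mS, mD, genStar]

def halfIdxOf (b : Bool) (j i : Fin n) : HalfIdx n hn :=
  if h : (b, j, i) = (true, finN n hn, finN n hn) then ⟨(false, finN n hn, finN n hn), by simp⟩
  else ⟨(b, j, i), h⟩

theorem halfIdxOf_val (q : HalfIdx n hn) : halfIdxOf hn q.1.1 q.1.2.1 q.1.2.2 = q :=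
  dif_neg q.2

theorem halfIdxOf_true_finN :
    halfIdxOf hn true (finN n hn) (finN n hn) = halfIdxOf hn false (finN n hn) (finN n hn) := by
  simp [halfIdxOf]

theorem chainTwo_halfIdxOf (c b : Bool) (j i : Fin n) :
    chainTwo hn (c, halfIdxOf hn b j i)
      = ⟨chainWord n hn (vMat n c b) 2 j i, _, vMat_mem_V c b, j, i, rfl⟩ := by
  unfold halfIdxOf
  split_ifs with h
  · simp only [Prod.mk.injEq] at h
    obtain ⟨rfl, rfl, rfl⟩ := h
    exact Subtype.ext (chainWord_two_vMat_true_finN hn c).symm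
  · rfl

theorem chainTwo_surjective : Function.Surjective (chainTwo hn) := by
  rintro ⟨w, v, hv, j, i, rfl⟩
  obtain ⟨c, b, rfl⟩ := (mem_V_iff (n := n)).1 hv
  exact ⟨(c, halfIdxOf hn b j i), chainTwo_halfIdxOf hn c b j i⟩

noncomputable def chainTwoEquiv : Bool × HalfIdx n hn ≃ Cset n hn 2 :=
  Equiv.ofBijective (chainTwo hn) ⟨chainTwo_injective hn, chainTwo_surjective hn⟩

end ChainWords

section HomToKE

variable {k : Type*} [Field k] {n : ℕ} (ε : Aq k n →ₐ[k] k)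

theorem op_smul_KE (a : Aq k n) (c : KE k n ε) : MulOpposite.op a • c = ε a • c := rfl

theorem map_single_eq_smul {α : Type*} (φ : (α →₀ Aq k n) →ₗ[(Aq k n)ᵐᵒᵖ] KE k n ε) (a : α)
    (b : Aq k n) : φ (Finsupp.single a b) = ε b • φ (Finsupp.single a 1) := by
  rw [← op_smul_KE, ← map_smul, Finsupp.smul_single, op_smul_eq_mul, one_mul]

noncomputable def counitSMul (c : KE k n ε) : Aq k n →ₗ[(Aq k n)ᵐᵒᵖ] KE k n ε where
  toFun b := ε b • c
  map_add' a b := by simp only [map_add, add_smul]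
  map_smul' r b := by
    rw [← MulOpposite.op_unop r, RingHom.id_apply, op_smul_KE, op_smul_eq_mul, map_mul, mul_comm,
      mul_smul]

noncomputable def homFreeEquiv (α : Type*) :
    ((α →₀ Aq k n) →ₗ[(Aq k n)ᵐᵒᵖ] KE k n ε) ≃ₗ[k] (α → k) where
  toFun g a := g (Finsupp.single a 1)
  map_add' _ _ := rfl
  map_smul' _ _ := rfl
  invFun f := Finsupp.lsum ℕ fun a => counitSMul ε (f a)
  left_inv g := by
    refine Finsupp.lhom_ext fun a b => ?_
    rw [Finsupp.lsum_single, map_single_eq_smul ε g a b]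
    rfl
  right_inv f := by
    funext a
    simp only [Finsupp.lsum_single]
    exact (congrArg (· • f a) (map_one ε)).trans (one_smul k _)

variable {ε} in
/-- `KE k n ε` is a type synonym of `k`; seen as `k`-valued, the values of `g` can be handled
by `ring`. -/
noncomputable def toAddMonoidHomK {M : Type*} [AddCommMonoid M] [Module (Aq k n)ᵐᵒᵖ M]
    (g : M →ₗ[(Aq k n)ᵐᵒᵖ] KE k n ε) : M →+ k :=
  g.toAddMonoidHom

end HomToKE

section Coboundary

variable {k : Type*} [Field k] {n : ℕ} {hn : 2 ≤ n} {ε : Aq k n →ₐ[k] k}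

open Classical in
/-- The values `g(v^{(2)}_{j,i} ⊗ 1)` as a matrix in `(j, i)`; junk value `0` for `v ∉ V`. -/
noncomputable def chainVal (g : Pmod k n hn 2 →ₗ[(Aq k n)ᵐᵒᵖ] KE k n ε) (v : Mat n) :
    Matrix (Fin n) (Fin n) k :=
  fun j i => if hv : v ∈ V n then g (bas k n hn 2 v hv j i 1) else 0

theorem chainVal_of_mem (g : Pmod k n hn 2 →ₗ[(Aq k n)ᵐᵒᵖ] KE k n ε) {v : Mat n}
    (hv : v ∈ V n) (j i : Fin n) : chainVal g v j i = g (bas k n hn 2 v hv j i 1) :=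
  dif_pos hv

theorem toAddMonoidHomK_bas (g : Pmod k n hn 2 →ₗ[(Aq k n)ᵐᵒᵖ] KE k n ε) {v : Mat n}
    (hv : v ∈ V n) (j i : Fin n) (a : Aq k n) :
    toAddMonoidHomK g (bas k n hn 2 v hv j i a) = ε a * chainVal g v j i := by
  rw [chainVal_of_mem g hv]
  exact map_single_eq_smul ε g _ a

theorem toAddMonoidHomK_dTail_three
    (hε : ∀ v ∈ V n, ∀ j i : Fin n, ε (gen k v j i) = if j = i then 1 else 0)
    (g : Pmod k n hn 2 →ₗ[(Aq k n)ᵐᵒᵖ] KE k n ε) {v : Mat n} (hv : v ∈ V n) (j i : Fin n) :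
    toAddMonoidHomK g (dTail k n hn 3 v hv j i)
      = pullbackD3 hn (chainVal g v) (chainVal g (mD v)) (chainVal g (mT v)) (chainVal g (mS v))
          j i := by
  have hpw : ∀ w : Mat n, pw 3 w = w := fun _ => if_pos rfl
  have hsign : ε ((-1 : Aq k n) ^ 3) = -1 := by
    rw [map_pow, map_neg, map_one]
    norm_num
  dsimp only [dTail, Nat.reduceSub]
  simp only [pullbackD3, if_true, map_add, map_sub (toAddMonoidHomK g), map_sum,
    apply_ite (toAddMonoidHomK g), map_zero, toAddMonoidHomK_bas, hpw, hε _ hv, hε _ (V_mT hv),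
    hsign, ite_mul, one_mul, zero_mul, Finset.sum_ite_eq', Finset.mem_univ, rev_eq_finN_iff,
    sum_filter_ne_fin1_finN, Finset.sum_ite_irrel, Finset.sum_const_zero, ← Finset.mul_sum,
    Matrix.trace, Matrix.diag]
  split_ifs <;> ring

end Coboundary

section Cocycles

variable {k : Type*} [Field k] {n : ℕ} (hn : 2 ≤ n) (ε : Aq k n →ₐ[k] k)

noncomputable def homTwoEquiv :
    (Pmod k n hn 2 →ₗ[(Aq k n)ᵐᵒᵖ] KE k n ε) ≃ₗ[k] (Bool × HalfIdx n hn → k) :=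
  (homFreeEquiv ε _).trans (LinearEquiv.funCongrLeft k k (chainTwoEquiv hn))

theorem rank_homTwo : Module.rank k (Pmod k n hn 2 →ₗ[(Aq k n)ᵐᵒᵖ] KE k n ε)
    = ((2 * (2 * n ^ 2 - 1) : ℕ) : Cardinal) := by
  rw [(homTwoEquiv hn ε).rank_eq, rank_fun', Fintype.card_prod, Fintype.card_bool, card_halfIdx]

variable {hn ε}

theorem chainVal_vMat (g : Pmod k n hn 2 →ₗ[(Aq k n)ᵐᵒᵖ] KE k n ε) (c b : Bool) (j i : Fin n) :
    chainVal g (vMat n c b) j i = homTwoEquiv hn ε g (c, halfIdxOf hn b j i) := by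
  rw [chainVal_of_mem g (vMat_mem_V c b)]
  change _ = g (Finsupp.single (chainTwo hn (c, halfIdxOf hn b j i)) 1)
  rw [chainTwo_halfIdxOf]
  rfl

theorem chainVal_homTwoEquiv_symm (M : Bool → Bool → Matrix (Fin n) (Fin n) k)
    (hM : ∀ c, M c true (finN n hn) (finN n hn) = M c false (finN n hn) (finN n hn))
    (c b : Bool) :
    chainVal ((homTwoEquiv hn ε).symm fun q => M q.1 q.2.1.1 q.2.1.2.1 q.2.1.2.2) (vMat n c b)
      = M c b := by
  ext j i
  rw [chainVal_vMat, LinearEquiv.apply_symm_apply]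
  unfold halfIdxOf
  split_ifs with h
  · simp only [Prod.mk.injEq] at h
    obtain ⟨rfl, rfl, rfl⟩ := h
    exact (hM c).symm
  · rfl

theorem homMap_eq_zero_iff
    (hε : ∀ v ∈ V n, ∀ j i : Fin n, ε (gen k v j i) = if j = i then 1 else 0)
    (d3 : Pmod k n hn 3 →ₗ[(Aq k n)ᵐᵒᵖ] Pmod k n hn 2)
    (hd3 : ∀ (v : Mat n) (hv : v ∈ V n) (j i : Fin n),
      d3 (bas k n hn 3 v hv j i 1) = dTail k n hn 3 v hv j i)
    (g : Pmod k n hn 2 →ₗ[(Aq k n)ᵐᵒᵖ] KE k n ε) :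
    homMap k ε d3 g = 0 ↔ ∀ c b j i,
      pullbackD3 hn (chainVal g (vMat n c b)) (chainVal g (vMat n (!c) (!b)))
        (chainVal g (vMat n c (!b))) (chainVal g (vMat n (!c) b)) j i = 0 := by
  have hval : ∀ c b j i, homFreeEquiv ε _ (homMap k ε d3 g)
      ⟨chainWord n hn (vMat n c b) 3 j i, _, vMat_mem_V c b, j, i, rfl⟩
        = pullbackD3 hn (chainVal g (vMat n c b)) (chainVal g (vMat n (!c) (!b)))
          (chainVal g (vMat n c (!b))) (chainVal g (vMat n (!c) b)) j i := by
    intro c b j i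
    change toAddMonoidHomK g (d3 (bas k n hn 3 (vMat n c b) (vMat_mem_V c b) j i 1)) = _
    rw [hd3, toAddMonoidHomK_dTail_three hε, mD_vMat, mT_vMat, mS_vMat]
  rw [← (homFreeEquiv ε _).map_eq_zero_iff, funext_iff]
  constructor
  · intro h c b j i
    rw [← hval]
    exact h _
  · rintro h ⟨_, v, hv, j, i, rfl⟩
    obtain ⟨c, b, rfl⟩ := mem_V_iff.1 hv
    exact (hval c b j i).trans (h c b j i)

end Cocycles

section Kernel

variable {k : Type*} [Field k] {n : ℕ} {hn : 2 ≤ n} {ε : Aq k n →ₐ[k] k}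
  (hε : ∀ v ∈ V n, ∀ j i : Fin n, ε (gen k v j i) = if j = i then 1 else 0)
  (d3 : Pmod k n hn 3 →ₗ[(Aq k n)ᵐᵒᵖ] Pmod k n hn 2)
  (hd3 : ∀ (v : Mat n) (hv : v ∈ V n) (j i : Fin n),
    d3 (bas k n hn 3 v hv j i 1) = dTail k n hn 3 v hv j i)

variable (ε) in
noncomputable def kerRestrict : LinearMap.ker (homMap k ε d3) →ₗ[k] (HalfIdx n hn → k) :=
  LinearMap.funLeft k k (Prod.mk false) ∘ₗ (homTwoEquiv hn ε).toLinearMap ∘ₗ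
    (LinearMap.ker (homMap k ε d3)).subtype

include hε hd3 in
theorem kerRestrict_injective : Function.Injective (kerRestrict ε d3) := by
  rw [injective_iff_map_eq_zero]
  rintro ⟨g, hg⟩ h
  have hwhite : ∀ b, chainVal g (vMat n false b) = 0 := fun b => by
    ext j i
    rw [chainVal_vMat]
    exact congrFun h _
  obtain ⟨hz, hw⟩ := (forall_pullbackD3_eq_zero_iff hn _).1 ((homMap_eq_zero_iff hε d3 hd3 g).1 hg)
  have hall : ∀ c b, chainVal g (vMat n c b) = 0 := by
    rintro (_ | _) b
    · exact hwhite b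
    · cases b
      · rw [hz, hwhite, hwhite, kerSigma_zero]
      · rw [hw, hwhite, hwhite, kerSigma_zero]
  have : homTwoEquiv hn ε g = 0 := funext fun ⟨c, q⟩ => by
    rw [← halfIdxOf_val hn q, ← chainVal_vMat, hall]
    rfl
  exact Subtype.ext ((homTwoEquiv hn ε).map_eq_zero_iff.1 this)

include hε hd3 in
theorem kerRestrict_surjective : Function.Surjective (kerRestrict ε d3) := by
  intro p
  let x : Matrix (Fin n) (Fin n) k := fun j i => p (halfIdxOf hn false j i)
  let y : Matrix (Fin n) (Fin n) k := fun j i => p (halfIdxOf hn true j i)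
  let M : Bool → Bool → Matrix (Fin n) (Fin n) k
    | false, false => x
    | false, true => y
    | true, false => kerSigma hn x y
    | true, true => kerSigma hn y x
  have hxy : y (finN n hn) (finN n hn) = x (finN n hn) (finN n hn) := by
    simp only [x, y, halfIdxOf_true_finN]
  have hM : ∀ c, M c true (finN n hn) (finN n hn) = M c false (finN n hn) (finN n hn) := by
    rintro (_ | _)
    exacts [hxy, (kerSigma_finN_finN_comm hn hxy).symm]
  set g := (homTwoEquiv hn ε).symm fun q => M q.1 q.2.1.1 q.2.1.2.1 q.2.1.2.2
  have hg : homMap k ε d3 g = 0 := by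
    rw [homMap_eq_zero_iff hε d3 hd3, forall_pullbackD3_eq_zero_iff]
    simp only [g, chainVal_homTwoEquiv_symm M hM]
    exact ⟨rfl, rfl⟩
  refine ⟨⟨g, hg⟩, funext fun ⟨⟨b, j, i⟩, hq⟩ => ?_⟩
  change homTwoEquiv hn ε g (false, ⟨(b, j, i), hq⟩) = _
  rw [LinearEquiv.apply_symm_apply]
  cases b <;> exact congrArg p (halfIdxOf_val hn ⟨_, hq⟩)

end Kernel

theorem statement_17 (k : Type*) [Field k] (n : ℕ) (hn : 2 ≤ n)
    (ε : Aq k n →ₐ[k] k)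
    (hε : ∀ v ∈ V n, ∀ j i : Fin n, ε (gen k v j i) = if j = i then 1 else 0)
    (d3 : Pmod k n hn 3 →ₗ[(Aq k n)ᵐᵒᵖ] Pmod k n hn 2)
    (hd3 : ∀ (v : Mat n) (hv : v ∈ V n) (j i : Fin n),
      d3 (bas k n hn 3 v hv j i 1) = dTail k n hn 3 v hv j i) :
    Module.rank k (LinearMap.ker (homMap k ε d3)) = ((2 * n ^ 2 - 1 : ℕ) : Cardinal) ∧
      Module.rank k (LinearMap.range (homMap k ε d3)) = ((2 * n ^ 2 - 1 : ℕ) : Cardinal) := by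
  have hker : Module.rank k (LinearMap.ker (homMap k ε d3)) = ((2 * n ^ 2 - 1 : ℕ) : Cardinal) := by
    rw [(LinearEquiv.ofBijective (kerRestrict ε d3)
      ⟨kerRestrict_injective hε d3 hd3, kerRestrict_surjective hε d3 hd3⟩).rank_eq, rank_fun',
      card_halfIdx]
  refine ⟨hker, ?_⟩
  have h := LinearMap.rank_range_add_rank_ker (homMap k ε d3)
  rw [hker, rank_homTwo, two_mul (2 * n ^ 2 - 1), Nat.cast_add] at h
  exact (Cardinal.add_nat_inj _).1 h

end UnPlusAnick
end
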